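/- arXiv:2109.00322 — 3 statements merged into one kernel-verified Lean document; each statement's English description precedes it below -/
import Mathlib

section
/- Let $N$ be even, $m \geq 1$, and let $w$ be the product-Gaussian weight and $f_{N-2}(x) = \sum_{j=0}^{N-2} x^j/(j!)^m$. Then for all real $x$, $\int_{-\infty}^{\infty} \mathrm{sgn}(v)\,(v-x)\, w(N^{m/2} v)\, f_{N-2}(N^m x v)\, dv = (2/N)^m$. -/
open MeasureTheory Real

private lemma rsign_mul (a b : ℝ) : Real.sign (a * b) = Real.sign a * Real.sign b := by
  rcases lt_trichotomy a 0 with ha | rfl | ha <;> rcases lt_trichotomy b 0 with hb | rfl | hb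
  · rw [Real.sign_of_pos (mul_pos_of_neg_of_neg ha hb), Real.sign_of_neg ha,
      Real.sign_of_neg hb]; norm_num
  · simp [Real.sign_zero]
  · rw [Real.sign_of_neg (mul_neg_of_neg_of_pos ha hb), Real.sign_of_neg ha,
      Real.sign_of_pos hb]; norm_num
  · simp [Real.sign_zero]
  · simp [Real.sign_zero]
  · simp [Real.sign_zero]
  · rw [Real.sign_of_neg (mul_neg_of_pos_of_neg ha hb), Real.sign_of_pos ha,
      Real.sign_of_neg hb]; norm_num
  · simp [Real.sign_zero]
  · rw [Real.sign_of_pos (mul_pos ha hb), Real.sign_of_pos ha, Real.sign_of_pos hb]; norm_num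

private lemma rsign_prod {ι : Type*} (s : Finset ι) (g : ι → ℝ) :
    Real.sign (∏ i ∈ s, g i) = ∏ i ∈ s, Real.sign (g i) := by
  classical
  induction s using Finset.induction with
  | empty => simp [Real.sign_one]
  | insert a s h ih => rw [Finset.prod_insert h, Finset.prod_insert h, rsign_mul, ih]

private lemma meas_rsign : Measurable Real.sign := by
  have : Real.sign = fun r : ℝ => if r < 0 then (-1 : ℝ) else if 0 < r then 1 else 0 := by
    funext r; rw [Real.sign]
  rw [this]
  exact Measurable.ite measurableSet_Iio measurable_const
    (Measurable.ite measurableSet_Ioi measurable_const measurable_const)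

/-- The one-dimensional integrand. -/
private noncomputable def φR (k : ℕ) (t : ℝ) : ℝ :=
  Real.sign t * t ^ k * Real.exp (-(1/2) * t ^ 2)

private noncomputable def SR (k : ℕ) : ℝ := ∫ t : ℝ, φR k t

private lemma φR_integrable (k : ℕ) : Integrable (φR k) := by
  have h0 : Integrable (fun t : ℝ => t ^ k * Real.exp (-(1/2) * t ^ 2)) := by
    have hs : (-1 : ℝ) < (k : ℝ) := lt_of_lt_of_le (by norm_num) (Nat.cast_nonneg k)
    have := integrable_rpow_mul_exp_neg_mul_sq (b := 1/2) (by norm_num) hs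
    simpa [Real.rpow_natCast] using this
  refine h0.abs.mono' ?_ ?_
  · exact ((meas_rsign.mul (measurable_id.pow_const k)).mul
      (((measurable_id.pow_const 2).const_mul _).exp)).aestronglyMeasurable
  · filter_upwards with t
    have hsle : |Real.sign t| ≤ 1 := by
      rcases lt_trichotomy t 0 with ht | rfl | ht
      · rw [Real.sign_of_neg ht]; norm_num
      · rw [Real.sign_zero]; norm_num
      · rw [Real.sign_of_pos ht]; norm_num
    have h1 : ‖φR k t‖ = |Real.sign t| * |t ^ k * Real.exp (-(1/2) * t ^ 2)| := by
      rw [φR, Real.norm_eq_abs, mul_assoc, abs_mul]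
    rw [h1]
    have h2 : (0:ℝ) ≤ |t ^ k * Real.exp (-(1/2) * t ^ 2)| := abs_nonneg _
    nlinarith [abs_nonneg (Real.sign t)]

private lemma SR_even (k : ℕ) (hk : Even k) : SR k = 0 := by
  have h := integral_neg_eq_self (φR k) (volume : Measure ℝ)
  have h2 : ∀ t : ℝ, φR k (-t) = -(φR k t) := by
    intro t
    rw [φR, φR, Real.sign_neg, hk.neg_pow, neg_sq]
    ring
  simp_rw [h2, integral_neg] at h
  have : SR k = ∫ t : ℝ, φR k t := rfl
  rw [this]; linarith

private lemma SR_odd (l : ℕ) : SR (2*l+1) = 2 ^ (l+1) * (Nat.factorial l : ℝ) := by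
  have h1 : ∀ t : ℝ, φR (2*l+1) t
      = |t| ^ (2*l+1) * Real.exp (-(1/2) * |t| ^ 2) := by
    intro t
    rcases lt_trichotomy t 0 with ht | rfl | ht
    · rw [φR, Real.sign_of_neg ht, abs_of_neg ht, Odd.neg_pow ⟨l, by ring⟩, neg_sq]
      ring
    · simp [φR, Real.sign_zero]
    · rw [φR, Real.sign_of_pos ht, abs_of_pos ht]; ring
  have h2 : SR (2*l+1) = ∫ t : ℝ, φR (2*l+1) t := rfl
  rw [h2]
  simp_rw [h1]
  rw [integral_comp_abs (f := fun t : ℝ => t ^ (2*l+1) * Real.exp (-(1/2) * t ^ 2))]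
  have hq : (-1 : ℝ) < ((2*l+1 : ℕ) : ℝ) := lt_of_lt_of_le (by norm_num) (Nat.cast_nonneg _)
  have h := integral_rpow_mul_exp_neg_mul_rpow (p := 2) (q := ((2*l+1 : ℕ) : ℝ)) (b := 1/2)
    two_pos hq (by norm_num)
  simp_rw [Real.rpow_two, Real.rpow_natCast] at h
  have e : (((2*l+1 : ℕ) : ℝ) + 1) / 2 = (l : ℝ) + 1 := by push_cast; ring
  rw [show (-(((2*l+1 : ℕ) : ℝ) + 1) / 2) = -(((l:ℝ)+1)) by rw [neg_div, e], e] at h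
  rw [Real.Gamma_nat_eq_factorial l] at h
  have e2 : ((1:ℝ)/2) ^ (-(((l:ℝ)+1))) = 2 ^ (((l:ℝ)+1)) := by
    rw [one_div, Real.inv_rpow (by norm_num), Real.rpow_neg (by norm_num), inv_inv]
  rw [e2, show ((l:ℝ)+1) = ((l+1 : ℕ) : ℝ) by push_cast; ring, Real.rpow_natCast] at h
  rw [h]
  ring

private lemma tele_sum (a : ℕ → ℝ) (h : ∀ l, a (2*l+1) + a (2*l+2) = 0) (M : ℕ) :
    ∑ j ∈ Finset.range (2*M+1), a j = a 0 := by
  induction M with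
  | zero => simp
  | succ M ih =>
    rw [show 2*(M+1)+1 = (2*M+1) + 1 + 1 by ring, Finset.sum_range_succ,
      Finset.sum_range_succ, ih, show 2*M+1+1 = 2*M+2 from rfl]
    have := h M
    linarith

/-- the exact identity
`∫ sgn(v) (v-x) w(N^{m/2} v) f_{N-2}(N^m x v) dv = (2/N)^m`,
where `w` is the product-Gaussian weight (given by its defining property)
and `f_{N-2}(x) = ∑_{j=0}^{N-2} x^j/(j!)^m`. -/
theorem sgn_integral_identity (m : ℕ) (hm : 1 ≤ m) (N : ℕ) (hNeven : Even N) (hN2 : 2 ≤ N)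
    (w : ℝ → ℝ)
    (hw : ∀ g : ℝ → ℝ, ∫ x, g x * w x =
      ∫ lam : Fin m → ℝ, g (∏ j, lam j) * Real.exp (-(1/2) * ∑ j, (lam j)^2))
    (f : ℝ → ℝ)
    (hf : ∀ x : ℝ, f x = ∑ j ∈ Finset.range (N - 1), x ^ j / ((j.factorial : ℝ)) ^ m)
    (x : ℝ) :
    ∫ v : ℝ, Real.sign v * (v - x) * w ((N:ℝ) ^ ((m:ℝ)/2) * v) * f ((N:ℝ) ^ m * x * v) =
      (2 / (N:ℝ)) ^ m := by
  have hNpos : (0:ℝ) < N := by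
    have : (2:ℝ) ≤ N := by exact_mod_cast hN2
    linarith
  set c : ℝ := (N:ℝ) ^ ((m:ℝ)/2) with hcdef
  have hc : 0 < c := Real.rpow_pos_of_pos hNpos _
  have hc2 : c * c = (N:ℝ) ^ m := by
    rw [hcdef, ← Real.rpow_add hNpos, ← Real.rpow_natCast (N:ℝ) m]
    congr 1
    ring
  set A : ℕ → ℝ := fun j => (c*x)^j / (Nat.factorial j : ℝ)^m * (1/c) with hA
  set B : ℕ → ℝ := fun j => -((c*x)^j / (Nat.factorial j : ℝ)^m) * x with hB
  -- Step 1: substitution u = c v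
  have step1 : ∫ v : ℝ, Real.sign v * (v - x) * w (c * v) * f ((N:ℝ) ^ m * x * v)
      = c⁻¹ * ∫ u : ℝ, (Real.sign u * (u / c - x) * f (c * x * u)) * w u := by
    have h := MeasureTheory.Measure.integral_comp_mul_left
      (fun u : ℝ => (Real.sign u * (u / c - x) * f (c * x * u)) * w u) c
    simp only [smul_eq_mul] at h
    rw [abs_inv, abs_of_pos hc] at h
    rw [← h]
    congr 1; funext v
    have e2 : c * v / c = v := by field_simp
    rw [rsign_mul, Real.sign_of_pos hc, e2,
      show c * x * (c * v) = (N:ℝ)^m * x * v by rw [← hc2]; ring]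
    ring
  -- Step 2: use the defining property of w
  have step2 : ∫ u : ℝ, (Real.sign u * (u / c - x) * f (c * x * u)) * w u
      = ∫ lam : Fin m → ℝ, (Real.sign (∏ i, lam i) * ((∏ i, lam i) / c - x)
          * f (c * x * (∏ i, lam i))) * Real.exp (-(1/2) * ∑ i, (lam i)^2) :=
    hw (fun u => Real.sign u * (u / c - x) * f (c * x * u))
  -- Step 3: expand f and factorize
  have hfac : ∀ j : ℕ, ((Nat.factorial j : ℝ))^m ≠ 0 := fun j =>
    pow_ne_zero _ (Nat.cast_ne_zero.mpr (Nat.factorial_ne_zero j))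
  have hprod : ∀ (k : ℕ) (lam : Fin m → ℝ), (∏ i, φR k (lam i))
      = Real.sign (∏ i, lam i) * (∏ i, lam i) ^ k * Real.exp (-(1/2) * ∑ i, (lam i)^2) := by
    intro k lam
    calc ∏ i, φR k (lam i)
        = (∏ i, Real.sign (lam i)) * (∏ i, (lam i)^k)
            * ∏ i, Real.exp (-(1/2) * (lam i)^2) := by
          simp_rw [φR]
          rw [Finset.prod_mul_distrib, Finset.prod_mul_distrib]
      _ = _ := by
          rw [← rsign_prod, Finset.prod_pow, ← Real.exp_sum, ← Finset.mul_sum]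
  have expand : (fun lam : Fin m → ℝ => (Real.sign (∏ i, lam i) * ((∏ i, lam i) / c - x)
          * f (c * x * (∏ i, lam i))) * Real.exp (-(1/2) * ∑ i, (lam i)^2))
      = fun lam => ∑ j ∈ Finset.range (N-1),
          (A j * ∏ i, φR (j+1) (lam i) + B j * ∏ i, φR j (lam i)) := by
    funext lam
    rw [hf]
    rw [Finset.mul_sum, Finset.sum_mul]
    refine Finset.sum_congr rfl fun j _ => ?_
    rw [hprod, hprod, hA, hB]
    simp only []
    rw [mul_pow (c*x) (∏ i, lam i) j, pow_succ]
    field_simp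
    ring
  have hΦint : ∀ k : ℕ, Integrable (fun lam : Fin m → ℝ => ∏ i, φR k (lam i)) := fun k =>
    Integrable.fintype_prod (fun _ => φR_integrable k)
  have hΦval : ∀ k : ℕ, (∫ lam : Fin m → ℝ, ∏ i, φR k (lam i)) = (SR k) ^ m := by
    intro k
    rw [show (SR k) = ∫ t : ℝ, φR k t from rfl]
    rw [MeasureTheory.volume_pi, MeasureTheory.integral_fintype_prod_eq_pow (ι := Fin m) (φR k), Fintype.card_fin]
  have step3 : ∫ lam : Fin m → ℝ, (Real.sign (∏ i, lam i) * ((∏ i, lam i) / c - x)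
          * f (c * x * (∏ i, lam i))) * Real.exp (-(1/2) * ∑ i, (lam i)^2)
      = ∑ j ∈ Finset.range (N-1), (A j * (SR (j+1))^m + B j * (SR j)^m) := by
    rw [expand, integral_finset_sum (Finset.range (N-1))
      (f := fun j (lam : Fin m → ℝ) => A j * ∏ i, φR (j+1) (lam i) + B j * ∏ i, φR j (lam i))
      (fun j _ => ((hΦint (j+1)).const_mul _).add ((hΦint j).const_mul _))]
    refine Finset.sum_congr rfl fun j _ => ?_
    rw [integral_add ((hΦint (j+1)).const_mul _) ((hΦint j).const_mul _),
      integral_const_mul, integral_const_mul, hΦval, hΦval]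
  rw [step1, step2, step3, Finset.mul_sum]
  -- Step 4: telescoping
  obtain ⟨K, hK⟩ := hNeven
  have hK1 : 1 ≤ K := by omega
  have hN1 : N - 1 = 2*(K-1)+1 := by omega
  have hm' : m ≠ 0 := by omega
  have htele : ∀ l : ℕ, (c⁻¹ * (A (2*l+1) * (SR (2*l+1+1))^m + B (2*l+1) * (SR (2*l+1))^m))
      + (c⁻¹ * (A (2*l+2) * (SR (2*l+2+1))^m + B (2*l+2) * (SR (2*l+2))^m)) = 0 := by
    intro l
    have h1 : SR (2*l+1+1) = 0 := by
      rw [show 2*l+1+1 = 2*(l+1) by ring]; exact SR_even _ ⟨l+1, by ring⟩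
    have h4 : SR (2*l+2) = 0 := by
      rw [show 2*l+2 = 2*(l+1) by ring]; exact SR_even _ ⟨l+1, by ring⟩
    have h2 : SR (2*l+1) = 2 ^ (l+1) * (Nat.factorial l : ℝ) := SR_odd l
    have h3 : SR (2*l+2+1) = 2 ^ (l+2) * (Nat.factorial (l+1) : ℝ) := by
      rw [show 2*l+2+1 = 2*(l+1)+1 by ring]; exact SR_odd (l+1)
    rw [h1, h2, h3, zero_pow hm', hA, hB]
    clear h4
    simp only []
    have e5 : ((Nat.factorial (2*l+2) : ℝ)) = (2*(l:ℝ)+2) * (Nat.factorial (2*l+1) : ℝ) := by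
      rw [show 2*l+2 = (2*l+1)+1 by ring, Nat.factorial_succ]
      push_cast; ring
    have e6 : ((Nat.factorial (l+1) : ℝ)) = ((l:ℝ)+1) * (Nat.factorial l : ℝ) := by
      rw [Nat.factorial_succ]; push_cast; ring
    rw [e5, e6]
    have hf1 : ((Nat.factorial (2*l+1) : ℝ)) ≠ 0 := Nat.cast_ne_zero.mpr (Nat.factorial_ne_zero _)
    have hf0 : ((Nat.factorial l : ℝ)) ≠ 0 := Nat.cast_ne_zero.mpr (Nat.factorial_ne_zero _)
    have h2l2 : (2*(l:ℝ)+2) ≠ 0 := by positivity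
    have key1 : ((2:ℝ)^(l+2) * (((l:ℝ)+1) * (Nat.factorial l:ℝ)))^m
        = ((2:ℝ)*(l:ℝ)+2)^m * ((2:ℝ)^(l+1) * (Nat.factorial l:ℝ))^m := by
      rw [← mul_pow]; congr 1; ring
    have key2 : (((2:ℝ)*(l:ℝ)+2) * (Nat.factorial (2*l+1):ℝ))^m
        = ((2:ℝ)*(l:ℝ)+2)^m * ((Nat.factorial (2*l+1):ℝ))^m := mul_pow _ _ _
    rw [key1, key2]
    have hP : ((2:ℝ)*(l:ℝ)+2)^m ≠ 0 := pow_ne_zero _ h2l2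
    field_simp
    ring
  rw [hN1, tele_sum _ htele (K-1)]
  -- Step 5: value of the first term
  have hS1 : SR 1 = 2 := by
    have := SR_odd 0
    norm_num at this
    exact this
  have hS0 : SR 0 = 0 := SR_even 0 Even.zero
  rw [hS0, hS1, zero_pow hm', hA, hB]
  simp only []
  rw [pow_zero, Nat.factorial_zero]
  rw [show (2 / (N:ℝ))^m = 2^m / (N:ℝ)^m from div_pow 2 _ m, ← hc2]
  field_simp
  simp
end

section
/- Let $N$ be even, $m \geq 1$, $w$ the product-Gaussian weight and $f_{N-2}(x) = \sum_{j=0}^{N-2} x^j/(j!)^m$. Then for all real $x$, $\int_{-\infty}^{\infty} (x-v)\, w(N^{m/2} v)\, f_{N-2}(N^m x v)\, dv = D_{N,m}\, x^{N-1}$, where $D_{N,m} = N^{m(N-3)/2}\, 2^{m(N-1)/2}\, \big(\Gamma(\tfrac{N-1}{2})/(N-2)!\big)^m$. -/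
open MeasureTheory Real


noncomputable def gmom (k : ℕ) : ℝ := ∫ t : ℝ, t ^ k * Real.exp (-(1/2) * t ^ 2)

lemma gmom_int (k : ℕ) : Integrable (fun t : ℝ => t ^ k * Real.exp (-(1/2) * t ^ 2)) := by
  have h := integrable_rpow_mul_exp_neg_mul_sq (b := 1/2) (by norm_num)
    (s := (k : ℝ)) (lt_of_lt_of_le neg_one_lt_zero (Nat.cast_nonneg k))
  simp_rw [Real.rpow_natCast] at h
  convert h using 2 with t

lemma gmom_odd {k : ℕ} (hk : Odd k) : gmom k = 0 := by
  have h : gmom k = -gmom k := by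
    unfold gmom
    conv_lhs => rw [← integral_neg_eq_self (fun t : ℝ => t ^ k * Real.exp (-(1/2) * t ^ 2)) volume]
    rw [← integral_neg]
    congr 1; funext t
    rw [hk.neg_pow, neg_sq]
    ring
  linarith

lemma gmom_even {k : ℕ} (hk : Even k) :
    gmom k = 2 ^ (((k : ℝ) + 1) / 2) * Real.Gamma (((k : ℝ) + 1) / 2) := by
  have h1 : (fun t : ℝ => t ^ k * Real.exp (-(1/2) * t ^ 2)) =
      fun t : ℝ => |t| ^ k * Real.exp (-(1/2) * |t| ^ 2) := by
    funext t; rw [hk.pow_abs, sq_abs]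
  rw [gmom, h1, integral_comp_abs (f := fun t : ℝ => t ^ k * Real.exp (-(1/2) * t ^ 2))]
  have h2 : ∀ t ∈ Set.Ioi (0:ℝ), t ^ k * Real.exp (-(1/2) * t ^ 2)
      = t ^ (k:ℝ) * Real.exp (-(1/2) * t ^ (2:ℝ)) := by
    intro t ht
    rw [Real.rpow_natCast, Real.rpow_two]
  rw [setIntegral_congr_fun measurableSet_Ioi h2]
  have h3 := integral_rpow_mul_exp_neg_mul_rpow (p := 2) (q := (k:ℝ)) (b := 1/2)
    (by norm_num) (lt_of_lt_of_le neg_one_lt_zero (Nat.cast_nonneg k)) (by norm_num)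
  simp_rw [neg_mul] at h3 ⊢
  rw [h3]
  rw [show ((1:ℝ)/2) = (2:ℝ)⁻¹ by norm_num, Real.inv_rpow (by norm_num), ← Real.rpow_neg (by norm_num)]
  ring_nf

lemma gmom_rec (k : ℕ) : gmom (k + 2) = ((k : ℝ) + 1) * gmom k := by
  rcases Nat.even_or_odd k with hk | hk
  · rw [gmom_even hk, gmom_even (hk.add even_two)]
    push_cast
    rw [show ((k:ℝ) + 2 + 1) / 2 = ((k:ℝ) + 1) / 2 + 1 by ring,
      Real.Gamma_add_one (by positivity), Real.rpow_add_one (by norm_num)]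
    ring
  · rw [gmom_odd hk, gmom_odd ⟨hk.choose + 1, by have := hk.choose_spec; omega⟩, mul_zero]

lemma prod_form {m : ℕ} (k : ℕ) (lam : Fin m → ℝ) :
    (∏ j, lam j) ^ k * Real.exp (-(1/2) * ∑ j, (lam j) ^ 2) =
      ∏ j, ((lam j) ^ k * Real.exp (-(1/2) * (lam j) ^ 2)) := by
  rw [← Finset.prod_pow, Finset.mul_sum, Real.exp_sum, ← Finset.prod_mul_distrib]

lemma gmom_prod_int {m : ℕ} (k : ℕ) :
    Integrable (fun lam : Fin m → ℝ => (∏ j, lam j) ^ k * Real.exp (-(1/2) * ∑ j, (lam j) ^ 2)) := by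
  simp_rw [prod_form]
  exact Integrable.fintype_prod (fun _ => gmom_int k)

lemma gmom_prod (m : ℕ) (k : ℕ) :
    ∫ lam : Fin m → ℝ, (∏ j, lam j) ^ k * Real.exp (-(1/2) * ∑ j, (lam j) ^ 2) = (gmom k) ^ m := by
  simp_rw [prod_form]
  erw [integral_fintype_prod_eq_pow (ι := Fin m) (μ := volume) (fun t : ℝ => t ^ k * Real.exp (-(1/2) * t ^ 2))]
  simp [gmom]

/-- the exact identity
`∫ (x-v) w(N^{m/2} v) f_{N-2}(N^m x v) dv = D_{N,m} x^{N-1}` with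
`D_{N,m} = N^{m(N-3)/2} 2^{m(N-1)/2} (Γ((N-1)/2)/(N-2)!)^m`. -/
theorem monic_integral_identity (m : ℕ) (hm : 1 ≤ m) (N : ℕ) (hNeven : Even N) (hN2 : 2 ≤ N)
    (w : ℝ → ℝ)
    (hw : ∀ g : ℝ → ℝ, ∫ x, g x * w x =
      ∫ lam : Fin m → ℝ, g (∏ j, lam j) * Real.exp (-(1/2) * ∑ j, (lam j)^2))
    (f : ℝ → ℝ)
    (hf : ∀ x : ℝ, f x = ∑ j ∈ Finset.range (N - 1), x ^ j / ((j.factorial : ℝ)) ^ m)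
    (x : ℝ) :
    ∫ v : ℝ, (x - v) * w ((N:ℝ) ^ ((m:ℝ)/2) * v) * f ((N:ℝ) ^ m * x * v) =
      ((N:ℝ) ^ ((m:ℝ) * ((N:ℝ) - 3) / 2) * 2 ^ ((m:ℝ) * ((N:ℝ) - 1) / 2) *
        (Real.Gamma (((N:ℝ) - 1)/2) / ((N - 2).factorial : ℝ)) ^ m) * x ^ (N - 1) := by
  have hN0 : (0:ℝ) < (N:ℝ) := by
    have : (0:ℕ) < N := by omega
    exact_mod_cast this
  set c : ℝ := (N:ℝ) ^ ((m:ℝ)/2) with hc_def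
  have hc : 0 < c := Real.rpow_pos_of_pos hN0 _
  set β : ℝ := (N:ℝ) ^ m * x with hβ_def
  set A : ℕ → ℝ := fun j => x * (β/c)^j / ((j.factorial : ℝ))^m with hA
  set B : ℕ → ℝ := fun j => (β/c)^j / (c * ((j.factorial : ℝ))^m) with hB
  -- step 1 : change of variables
  have hG : (fun v : ℝ => (x - v) * w (c * v) * f (β * v))
      = fun v => (fun u : ℝ => (x - u / c) * w u * f (β * (u / c))) (c * v) := by
    funext v
    simp only [mul_div_cancel_left₀ _ (ne_of_gt hc)]
  rw [show (∫ v : ℝ, (x - v) * w (c * v) * f (β * v))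
      = ∫ v : ℝ, (fun u : ℝ => (x - u / c) * w u * f (β * (u / c))) (c * v) from by rw [← hG],
    Measure.integral_comp_mul_left (fun u : ℝ => (x - u / c) * w u * f (β * (u / c))) c]
  -- step 2 : apply hw
  have hg : ∀ u : ℝ, (x - u / c) * w u * f (β * (u / c))
      = ((fun p : ℝ => (x - p / c) * f (β * (p / c))) u) * w u := fun u => by simp only; ring
  simp only [hg]
  rw [hw (fun p : ℝ => (x - p / c) * f (β * (p / c)))]
  -- step 3 : expand the polynomial
  have hexp : ∀ p : ℝ, (fun p : ℝ => (x - p / c) * f (β * (p / c))) p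
      = ∑ j ∈ Finset.range (N-1), (A j * p ^ j - B j * p ^ (j+1)) := by
    intro p
    simp only [hf, Finset.mul_sum, hA, hB]
    exact Finset.sum_congr rfl (fun j _ => by ring)
  simp only [hexp, Finset.sum_mul, sub_mul, mul_assoc]
  rw [integral_finset_sum (Finset.range (N-1))
    (f := fun j (lam : Fin m → ℝ) =>
      A j * ((∏ i, lam i) ^ j * Real.exp (-(1/2) * ∑ i, (lam i) ^ 2))
        - B j * ((∏ i, lam i) ^ (j+1) * Real.exp (-(1/2) * ∑ i, (lam i) ^ 2)))
    (fun j _ =>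
    ((gmom_prod_int j).const_mul (A j)).sub ((gmom_prod_int (j+1)).const_mul (B j)))]
  have hterm : ∀ j : ℕ, (∫ lam : Fin m → ℝ,
      (A j * ((∏ i, lam i) ^ j * Real.exp (-(1/2) * ∑ i, (lam i) ^ 2))
        - B j * ((∏ i, lam i) ^ (j+1) * Real.exp (-(1/2) * ∑ i, (lam i) ^ 2))))
      = A j * (gmom j) ^ m - B j * (gmom (j+1)) ^ m := by
    intro j
    rw [integral_sub ((gmom_prod_int j).const_mul _) ((gmom_prod_int (j+1)).const_mul _),
      integral_const_mul, integral_const_mul, gmom_prod, gmom_prod]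
  rw [Finset.sum_congr rfl (fun j _ => hterm j)]
  -- step 4 : telescoping
  have hcc : c * c = (N:ℝ) ^ m := by
    rw [hc_def, ← Real.rpow_add hN0, ← Real.rpow_natCast (N:ℝ) m]
    norm_num
  have hkey : ∀ j : ℕ, B (j+1) * (gmom (j+2)) ^ m = A j * (gmom j) ^ m := by
    intro j
    have h1 : (gmom (j+2)) ^ m = ((j:ℝ)+1) ^ m * (gmom j) ^ m := by
      rw [gmom_rec, mul_pow]
    have hβc : β = c * c * x := by rw [hβ_def, hcc]
    have hfac : ((j+1).factorial : ℝ) = ((j:ℝ)+1) * (j.factorial : ℝ) := by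
      rw [Nat.factorial_succ]; push_cast; ring
    have hj1 : ((j:ℝ)+1) ≠ 0 := by positivity
    have hjf : ((j.factorial : ℝ)) ≠ 0 := by positivity
    rw [h1, hA, hB]
    simp only [hfac, hβc, mul_pow]
    field_simp
    ring
  have hn1 : N - 1 = (N - 2) + 1 := by omega
  set n := N - 2 with hn_def
  have hg1 : (gmom 1) ^ m = 0 := by
    rw [gmom_odd odd_one, zero_pow (by omega)]
  have hsum : ∑ j ∈ Finset.range (N-1), (A j * (gmom j) ^ m - B j * (gmom (j+1)) ^ m)
      = A n * (gmom n) ^ m := by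
    rw [hn1, Finset.sum_sub_distrib,
      Finset.sum_range_succ (fun j => A j * (gmom j) ^ m) n,
      Finset.sum_range_succ' (fun j => B j * (gmom (j+1)) ^ m) n]
    simp only [hkey, hg1, mul_zero]
    ring
  rw [hsum]
  -- step 5 : final computation
  have hneven : Even n := by
    obtain ⟨r, hr⟩ := hNeven
    exact ⟨r - 1, by omega⟩
  have hn' : ((n:ℕ):ℝ) = (N:ℝ) - 2 := by
    rw [hn_def]; push_cast [hN2]; ring
  have hP : c⁻¹ * (((N:ℝ)^(m:ℕ))^n / c^n) = (N:ℝ) ^ ((m:ℝ) * ((N:ℝ) - 3) / 2) := by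
    rw [hc_def, ← Real.rpow_natCast (N:ℝ) m, ← Real.rpow_natCast ((N:ℝ)^(m:ℝ)) n,
      ← Real.rpow_natCast ((N:ℝ)^((m:ℝ)/2)) n, ← Real.rpow_mul hN0.le, ← Real.rpow_mul hN0.le,
      ← Real.rpow_neg hN0.le, ← Real.rpow_sub hN0, ← Real.rpow_add hN0]
    congr 1
    rw [hn']
    ring
  have e2 : ((2:ℝ) ^ (((N:ℝ)-1)/2)) ^ m = (2:ℝ) ^ ((m:ℝ) * ((N:ℝ)-1)/2) := by
    rw [← Real.rpow_natCast ((2:ℝ) ^ (((N:ℝ)-1)/2)) m, ← Real.rpow_mul (by norm_num)]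
    congr 1; ring
  rw [smul_eq_mul, abs_of_pos (inv_pos.mpr hc), hA, gmom_even hneven,
    show ((n:ℝ)+1)/2 = ((N:ℝ)-1)/2 by rw [hn']; ring,
    ← hP, ← e2, hn1]
  simp only [hβ_def, div_pow, mul_pow]
  have hjf : ((n.factorial : ℝ)) ≠ 0 := by positivity
  field_simp
  ring
end

section
/- Let $(\rho^{(k)})_{k\ge 1}$ be a family of symmetric correlation functions that are uniformly bounded: $|\rho^{(k)}(\xi_1,\ldots,\xi_k)| \le B_k$, and asymptotically clustering with fast-decreasing function $\phi$: for every partition of $\{1,\ldots,k\}$ into nonempty disjoint $I, J$, $|\rho^{(k)}(\xi_1,\ldots,\xi_k) - \rho^{(|I|)}(\xi_I)\rho^{(|J|)}(\xi_J)| \le \phi(\mathrm{Dist}(\xi_I,\xi_J))$, where $\mathrm{Dist}(\xi_I,\xi_J) = \min_{i\in I, j\in J}|\xi_i - \xi_j|$. Define the cluster functions $r^{(k)}(\xi_1,\ldots,\xi_k) = \sum_{\ell=1}^k (-1)^{\ell-1}(\ell-1)! \sum_{\pi \in \Pi(k,\ell)} \prod_{t=1}^\ell \rho^{(|\pi_t|)}(\xi_{\pi_t})$,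 summing over unordered partitions $\pi$ of $\{1,\ldots,k\}$ into $\ell$ blocks. Then for the case $k = 2$: $|r^{(2)}(\xi_1,\xi_2)| = |\rho^{(2)}(\xi_1,\xi_2) - \rho^{(1)}(\xi_1)\rho^{(1)}(\xi_2)| \le \phi(|\xi_1 - \xi_2|)$, and for $k = 3$ there is a constant $\kappa_3$ (depending only on $B_1, B_2, B_3$ and $\phi$) such that $|r^{(3)}(\xi_1,\xi_2,\xi_3)| \le \kappa_3\, \phi\big(\tfrac{1}{2}\,\mathrm{diam}(\xi_1,\xi_2,\xi_3)\big)$, where $\mathrm{diam}$ is the maximal pairwise distance. -/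
private lemma cluster_key
    (ρ1 : ℝ → ℝ) (ρ2 : ℝ → ℝ → ℝ) (ρ3 : ℝ → ℝ → ℝ → ℝ)
    (B1 : ℝ) (hB1 : ∀ x, |ρ1 x| ≤ B1)
    (φ : ℝ → ℝ) (hφ_nonneg : ∀ t, 0 ≤ φ t) (hφ_anti : AntitoneOn φ (Set.Ici 0))
    (hcl2 : ∀ ξ1 ξ2 : ℝ, |ρ2 ξ1 ξ2 - ρ1 ξ1 * ρ1 ξ2| ≤ φ |ξ1 - ξ2|)
    (hcl3a : ∀ ξ1 ξ2 ξ3 : ℝ,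
      |ρ3 ξ1 ξ2 ξ3 - ρ1 ξ1 * ρ2 ξ2 ξ3| ≤ φ (min |ξ1 - ξ2| |ξ1 - ξ3|))
    (ξ1 ξ2 ξ3 : ℝ)
    (h13 : |ξ1 - ξ3| ≤ |ξ1 - ξ2|) (hc : |ξ2 - ξ3| ≤ |ξ1 - ξ3|) :
    |ρ3 ξ1 ξ2 ξ3 - ρ1 ξ1 * ρ2 ξ2 ξ3 - ρ1 ξ2 * ρ2 ξ1 ξ3 - ρ1 ξ3 * ρ2 ξ1 ξ2 +
        2 * (ρ1 ξ1 * ρ1 ξ2 * ρ1 ξ3)| ≤ (1 + 2 * B1) * φ ((1/2) * |ξ1 - ξ2|) := by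
  set h : ℝ := (1/2) * |ξ1 - ξ2| with hh
  have hh0 : (0:ℝ) ≤ h := by positivity
  have htri : |ξ1 - ξ2| ≤ |ξ1 - ξ3| + |ξ3 - ξ2| := abs_sub_le ξ1 ξ3 ξ2
  have h32 : |ξ3 - ξ2| = |ξ2 - ξ3| := abs_sub_comm _ _
  have hh13 : h ≤ |ξ1 - ξ3| := by rw [hh]; rw [h32] at htri; linarith
  have hh12' : h ≤ |ξ1 - ξ2| := by
    have := abs_nonneg (ξ1 - ξ2); rw [hh]; linarith
  have hφ13 : φ |ξ1 - ξ3| ≤ φ h := hφ_anti hh0 (hh0.trans hh13) hh13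
  have hφ12 : φ |ξ1 - ξ2| ≤ φ h := hφ_anti hh0 (hh0.trans hh12') hh12'
  have hmin : φ (min |ξ1 - ξ2| |ξ1 - ξ3|) ≤ φ h := by
    have : h ≤ min |ξ1 - ξ2| |ξ1 - ξ3| := le_min hh12' hh13
    exact hφ_anti hh0 (hh0.trans this) this
  have hB1' : 0 ≤ B1 := (abs_nonneg _).trans (hB1 0)
  have e1 := hcl3a ξ1 ξ2 ξ3
  have e2 := hcl2 ξ1 ξ3
  have e3 := hcl2 ξ1 ξ2
  have key : ρ3 ξ1 ξ2 ξ3 - ρ1 ξ1 * ρ2 ξ2 ξ3 - ρ1 ξ2 * ρ2 ξ1 ξ3 - ρ1 ξ3 * ρ2 ξ1 ξ2 +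
      2 * (ρ1 ξ1 * ρ1 ξ2 * ρ1 ξ3)
      = (ρ3 ξ1 ξ2 ξ3 - ρ1 ξ1 * ρ2 ξ2 ξ3)
        - ρ1 ξ2 * (ρ2 ξ1 ξ3 - ρ1 ξ1 * ρ1 ξ3)
        - ρ1 ξ3 * (ρ2 ξ1 ξ2 - ρ1 ξ1 * ρ1 ξ2) := by ring
  rw [key]
  calc |(ρ3 ξ1 ξ2 ξ3 - ρ1 ξ1 * ρ2 ξ2 ξ3)
        - ρ1 ξ2 * (ρ2 ξ1 ξ3 - ρ1 ξ1 * ρ1 ξ3)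
        - ρ1 ξ3 * (ρ2 ξ1 ξ2 - ρ1 ξ1 * ρ1 ξ2)|
      ≤ |ρ3 ξ1 ξ2 ξ3 - ρ1 ξ1 * ρ2 ξ2 ξ3|
        + |ρ1 ξ2 * (ρ2 ξ1 ξ3 - ρ1 ξ1 * ρ1 ξ3)|
        + |ρ1 ξ3 * (ρ2 ξ1 ξ2 - ρ1 ξ1 * ρ1 ξ2)| := by
        calc _ ≤ |(ρ3 ξ1 ξ2 ξ3 - ρ1 ξ1 * ρ2 ξ2 ξ3)
            - ρ1 ξ2 * (ρ2 ξ1 ξ3 - ρ1 ξ1 * ρ1 ξ3)|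
            + |ρ1 ξ3 * (ρ2 ξ1 ξ2 - ρ1 ξ1 * ρ1 ξ2)| := abs_sub _ _
          _ ≤ _ := by
            have := abs_sub (ρ3 ξ1 ξ2 ξ3 - ρ1 ξ1 * ρ2 ξ2 ξ3)
              (ρ1 ξ2 * (ρ2 ξ1 ξ3 - ρ1 ξ1 * ρ1 ξ3))
            linarith
    _ ≤ φ h + B1 * φ h + B1 * φ h := by
        have t2 : |ρ1 ξ2 * (ρ2 ξ1 ξ3 - ρ1 ξ1 * ρ1 ξ3)| ≤ B1 * φ h := by
          rw [abs_mul]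
          exact mul_le_mul (hB1 _) (e2.trans hφ13) (abs_nonneg _) hB1'
        have t3 : |ρ1 ξ3 * (ρ2 ξ1 ξ2 - ρ1 ξ1 * ρ1 ξ2)| ≤ B1 * φ h := by
          rw [abs_mul]
          exact mul_le_mul (hB1 _) (e3.trans hφ12) (abs_nonneg _) hB1'
        have t1 : |ρ3 ξ1 ξ2 ξ3 - ρ1 ξ1 * ρ2 ξ2 ξ3| ≤ φ h := e1.trans hmin
        linarith
    _ = (1 + 2 * B1) * φ h := by ring

/-- cluster function bounds from clustering of correlation
functions: for `k = 2` the cluster function is bounded by `φ(|ξ₁-ξ₂|)`, and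
for `k = 3` there is a constant `κ₃` with
`|r⁽³⁾(ξ₁,ξ₂,ξ₃)| ≤ κ₃ φ(diam/2)`. -/
theorem cluster_function_bounds
    (ρ1 : ℝ → ℝ) (ρ2 : ℝ → ℝ → ℝ) (ρ3 : ℝ → ℝ → ℝ → ℝ)
    (B1 B2 B3 : ℝ)
    (hB1 : ∀ x, |ρ1 x| ≤ B1)
    (hB2 : ∀ x y, |ρ2 x y| ≤ B2)
    (hB3 : ∀ x y z, |ρ3 x y z| ≤ B3)
    (hsym2 : ∀ x y, ρ2 x y = ρ2 y x)
    (hsym3 : ∀ x y z, ρ3 x y z = ρ3 y x z ∧ ρ3 x y z = ρ3 x z y)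
    (φ : ℝ → ℝ) (hφ_nonneg : ∀ t, 0 ≤ φ t) (hφ_anti : AntitoneOn φ (Set.Ici 0))
    -- clustering for k = 2:
    (hcl2 : ∀ ξ1 ξ2 : ℝ, |ρ2 ξ1 ξ2 - ρ1 ξ1 * ρ1 ξ2| ≤ φ |ξ1 - ξ2|)
    -- clustering for k = 3, for each partition into singleton ∪ pair:
    (hcl3a : ∀ ξ1 ξ2 ξ3 : ℝ,
      |ρ3 ξ1 ξ2 ξ3 - ρ1 ξ1 * ρ2 ξ2 ξ3| ≤ φ (min |ξ1 - ξ2| |ξ1 - ξ3|))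
    (hcl3b : ∀ ξ1 ξ2 ξ3 : ℝ,
      |ρ3 ξ1 ξ2 ξ3 - ρ1 ξ2 * ρ2 ξ1 ξ3| ≤ φ (min |ξ2 - ξ1| |ξ2 - ξ3|))
    (hcl3c : ∀ ξ1 ξ2 ξ3 : ℝ,
      |ρ3 ξ1 ξ2 ξ3 - ρ1 ξ3 * ρ2 ξ1 ξ2| ≤ φ (min |ξ3 - ξ1| |ξ3 - ξ2|)) :
    (∀ ξ1 ξ2 : ℝ, |ρ2 ξ1 ξ2 - ρ1 ξ1 * ρ1 ξ2| ≤ φ |ξ1 - ξ2|) ∧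
    ∃ κ3 : ℝ, 0 < κ3 ∧ ∀ ξ1 ξ2 ξ3 : ℝ,
      |ρ3 ξ1 ξ2 ξ3 - ρ1 ξ1 * ρ2 ξ2 ξ3 - ρ1 ξ2 * ρ2 ξ1 ξ3 - ρ1 ξ3 * ρ2 ξ1 ξ2 +
          2 * (ρ1 ξ1 * ρ1 ξ2 * ρ1 ξ3)| ≤
        κ3 * φ ((1/2) * max (max |ξ1 - ξ2| |ξ1 - ξ3|) |ξ2 - ξ3|) := by
  have hB1' : 0 ≤ B1 := (abs_nonneg _).trans (hB1 0)
  refine ⟨hcl2, 1 + 2 * B1, by linarith, ?_⟩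
  intro ξ1 ξ2 ξ3
  have key := cluster_key ρ1 ρ2 ρ3 B1 hB1 φ hφ_nonneg hφ_anti hcl2 hcl3a
  have a21 : |ξ2 - ξ1| = |ξ1 - ξ2| := abs_sub_comm _ _
  have a31 : |ξ3 - ξ1| = |ξ1 - ξ3| := abs_sub_comm _ _
  have a32 : |ξ3 - ξ2| = |ξ2 - ξ3| := abs_sub_comm _ _
  have e231 : ρ3 ξ2 ξ3 ξ1 = ρ3 ξ1 ξ2 ξ3 := by
    rw [(hsym3 ξ2 ξ3 ξ1).1, (hsym3 ξ3 ξ2 ξ1).2, (hsym3 ξ3 ξ1 ξ2).1,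
      (hsym3 ξ1 ξ3 ξ2).2]
  have e321 : ρ3 ξ3 ξ2 ξ1 = ρ3 ξ1 ξ2 ξ3 := by
    rw [(hsym3 ξ3 ξ2 ξ1).1, (hsym3 ξ2 ξ3 ξ1).2, (hsym3 ξ2 ξ1 ξ3).1]
  have e312 : ρ3 ξ3 ξ1 ξ2 = ρ3 ξ1 ξ2 ξ3 := by
    rw [(hsym3 ξ3 ξ1 ξ2).1, (hsym3 ξ1 ξ3 ξ2).2]
  rcases le_total |ξ1 - ξ3| |ξ1 - ξ2| with h1 | h1
  · rcases le_total |ξ2 - ξ3| |ξ1 - ξ2| with h2 | h2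
    · -- |ξ1-ξ2| is the diameter
      have hmax : max (max |ξ1 - ξ2| |ξ1 - ξ3|) |ξ2 - ξ3| = |ξ1 - ξ2| := by
        rw [max_eq_left h1, max_eq_left h2]
      rw [hmax]
      rcases le_total |ξ2 - ξ3| |ξ1 - ξ3| with h3 | h3
      · exact key ξ1 ξ2 ξ3 h1 h3
      · have := key ξ2 ξ1 ξ3 (by linarith) (by linarith)
        rw [a21] at this
        calc _ = |ρ3 ξ2 ξ1 ξ3 - ρ1 ξ2 * ρ2 ξ1 ξ3 - ρ1 ξ1 * ρ2 ξ2 ξ3 -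
              ρ1 ξ3 * ρ2 ξ2 ξ1 + 2 * (ρ1 ξ2 * ρ1 ξ1 * ρ1 ξ3)| := by
              rw [← (hsym3 ξ1 ξ2 ξ3).1, ← hsym2 ξ1 ξ2]; ring_nf
          _ ≤ _ := this
    · -- |ξ2-ξ3| is the diameter
      have hmax : max (max |ξ1 - ξ2| |ξ1 - ξ3|) |ξ2 - ξ3| = |ξ2 - ξ3| := by
        rw [max_eq_left h1]; exact max_eq_right h2
      rw [hmax]
      rcases le_total |ξ1 - ξ3| |ξ1 - ξ2| with h3 | h3
      · have := key ξ2 ξ3 ξ1 (by linarith) (by linarith)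
        calc _ = |ρ3 ξ2 ξ3 ξ1 - ρ1 ξ2 * ρ2 ξ3 ξ1 - ρ1 ξ3 * ρ2 ξ2 ξ1 -
              ρ1 ξ1 * ρ2 ξ2 ξ3 + 2 * (ρ1 ξ2 * ρ1 ξ3 * ρ1 ξ1)| := by
              rw [e231, ← hsym2 ξ1 ξ3, ← hsym2 ξ1 ξ2]; ring_nf
          _ ≤ _ := this
      · have := key ξ3 ξ2 ξ1 (by linarith) (by linarith)
        rw [a32] at this
        calc _ = |ρ3 ξ3 ξ2 ξ1 - ρ1 ξ3 * ρ2 ξ2 ξ1 - ρ1 ξ2 * ρ2 ξ3 ξ1 -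
              ρ1 ξ1 * ρ2 ξ3 ξ2 + 2 * (ρ1 ξ3 * ρ1 ξ2 * ρ1 ξ1)| := by
              rw [e321, ← hsym2 ξ1 ξ3, ← hsym2 ξ1 ξ2, ← hsym2 ξ2 ξ3]; ring_nf
          _ ≤ _ := this
  · rcases le_total |ξ2 - ξ3| |ξ1 - ξ3| with h2 | h2
    · -- |ξ1-ξ3| is the diameter
      have hmax : max (max |ξ1 - ξ2| |ξ1 - ξ3|) |ξ2 - ξ3| = |ξ1 - ξ3| := by
        rw [max_eq_right h1]; exact max_eq_left h2
      rw [hmax]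
      rcases le_total |ξ2 - ξ3| |ξ1 - ξ2| with h3 | h3
      · have := key ξ1 ξ3 ξ2 (by linarith) (by linarith)
        calc _ = |ρ3 ξ1 ξ3 ξ2 - ρ1 ξ1 * ρ2 ξ3 ξ2 - ρ1 ξ3 * ρ2 ξ1 ξ2 -
              ρ1 ξ2 * ρ2 ξ1 ξ3 + 2 * (ρ1 ξ1 * ρ1 ξ3 * ρ1 ξ2)| := by
              rw [← (hsym3 ξ1 ξ2 ξ3).2, ← hsym2 ξ2 ξ3]; ring_nf
          _ ≤ _ := this
      · have := key ξ3 ξ1 ξ2 (by linarith) (by linarith)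
        rw [a31] at this
        calc _ = |ρ3 ξ3 ξ1 ξ2 - ρ1 ξ3 * ρ2 ξ1 ξ2 - ρ1 ξ1 * ρ2 ξ3 ξ2 -
              ρ1 ξ2 * ρ2 ξ3 ξ1 + 2 * (ρ1 ξ3 * ρ1 ξ1 * ρ1 ξ2)| := by
              rw [e312, ← hsym2 ξ2 ξ3, ← hsym2 ξ1 ξ3]; ring_nf
          _ ≤ _ := this
    · -- |ξ2-ξ3| is the diameter
      have hmax : max (max |ξ1 - ξ2| |ξ1 - ξ3|) |ξ2 - ξ3| = |ξ2 - ξ3| := by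
        rw [max_eq_right h1]; exact max_eq_right h2
      rw [hmax]
      rcases le_total |ξ1 - ξ3| |ξ1 - ξ2| with h3 | h3
      · have := key ξ2 ξ3 ξ1 (by linarith) (by linarith)
        calc _ = |ρ3 ξ2 ξ3 ξ1 - ρ1 ξ2 * ρ2 ξ3 ξ1 - ρ1 ξ3 * ρ2 ξ2 ξ1 -
              ρ1 ξ1 * ρ2 ξ2 ξ3 + 2 * (ρ1 ξ2 * ρ1 ξ3 * ρ1 ξ1)| := by
              rw [e231, ← hsym2 ξ1 ξ3, ← hsym2 ξ1 ξ2]; ring_nf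
          _ ≤ _ := this
      · have := key ξ3 ξ2 ξ1 (by linarith) (by linarith)
        rw [a32] at this
        calc _ = |ρ3 ξ3 ξ2 ξ1 - ρ1 ξ3 * ρ2 ξ2 ξ1 - ρ1 ξ2 * ρ2 ξ3 ξ1 -
              ρ1 ξ1 * ρ2 ξ3 ξ2 + 2 * (ρ1 ξ3 * ρ1 ξ2 * ρ1 ξ1)| := by
              rw [e321, ← hsym2 ξ1 ξ3, ← hsym2 ξ1 ξ2, ← hsym2 ξ2 ξ3]; ring_nf
          _ ≤ _ := this
end
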